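/- Let G₁ and G₂ be finite connected simple graphs on disjoint vertex sets V₁ and V₂, let v₁ ∈ V₁ and v₂ ∈ V₂, and let G be the graph on V₁ ∪ V₂ whose edges are those of G₁, those of G₂, together with the single edge (v₁, v₂). Then: (a) if β_{G₁}(v₁) ≠ 1 and β_{G₂}(v₂) ≠ 1, then ∂G = ∂G₁ ∪ ∂G₂; (b) if β_{G₁}(v₁) = 1 and β_{G₂}(v₂) ≠ 1, then ∂G = (∂G₁ ∪ ∂G₂) \ {v₁}; (c) if β_{G₁}(v₁) ≠ 1 and β_{G₂}(v₂) = 1, then ∂G = (∂G₁ ∪ ∂G₂) \ {v₂}; (d) if β_{G₁}(v₁) = 1 and β_{G₂}(v₂) = 1, then ∂G = (∂G₁ ∪ ∂G₂) \ {v₁, v₂}. -/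

import Mathlib

open Finset

variable {V : Type*}

/-- The Steinerberger boundary of a graph. -/
def sBoundary (G : SimpleGraph V) [Fintype V] [DecidableRel G.Adj] : Set V :=
  if Fintype.card V = 1 then Set.univ
  else {v | ∃ u : V, ∑ w ∈ G.neighborFinset v, G.dist w u < G.degree v * G.dist v u}

/-- `betaAt G v u = Σ_{w ∈ N(v)} (d(v,u) − d(w,u))`, computed in the integers. -/
noncomputable def betaAt (G : SimpleGraph V) [Fintype V] [DecidableRel G.Adj] (v u : V) : ℤ :=
  ∑ w ∈ G.neighborFinset v, ((G.dist v u : ℤ) - (G.dist w u : ℤ))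

/-- The boundary stability number `β_G(v) = max_{u ∈ V} β_G(v,u)`. -/
noncomputable def beta (G : SimpleGraph V) [Fintype V] [Nonempty V] [DecidableRel G.Adj]
    (v : V) : ℤ :=
  Finset.univ.sup' Finset.univ_nonempty (betaAt G v)

/-- The graph on `V₁ ⊕ V₂` obtained from the disjoint union of `G₁` and `G₂` by adding the
single edge between `v₁` and `v₂`. -/
def joinGraph {V₁ V₂ : Type*} (G₁ : SimpleGraph V₁) (G₂ : SimpleGraph V₂) (v₁ : V₁)
    (v₂ : V₂) : SimpleGraph (V₁ ⊕ V₂) where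
  Adj x y :=
    (∃ a b, x = Sum.inl a ∧ y = Sum.inl b ∧ G₁.Adj a b) ∨
    (∃ a b, x = Sum.inr a ∧ y = Sum.inr b ∧ G₂.Adj a b) ∨
    (x = Sum.inl v₁ ∧ y = Sum.inr v₂) ∨
    (x = Sum.inr v₂ ∧ y = Sum.inl v₁)
  symm := ⟨by
    rintro x y (⟨a, b, rfl, rfl, h⟩ | ⟨a, b, rfl, rfl, h⟩ | ⟨rfl, rfl⟩ | ⟨rfl, rfl⟩)
    · exact Or.inl ⟨b, a, rfl, rfl, h.symm⟩
    · exact Or.inr (Or.inl ⟨b, a, rfl, rfl, h.symm⟩)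
    · exact Or.inr (Or.inr (Or.inr ⟨rfl, rfl⟩))
    · exact Or.inr (Or.inr (Or.inl ⟨rfl, rfl⟩))⟩
  loopless := ⟨by
    rintro x (⟨a, b, h1, h2, h⟩ | ⟨a, b, h1, h2, h⟩ | ⟨h1, h2⟩ | ⟨h1, h2⟩)
    · subst h1; injection h2 with h2; subst h2; exact G₁.loopless.irrefl _ h
    · subst h1; injection h2 with h2; subst h2; exact G₂.loopless.irrefl _ h
    · subst h1; simp at h2
    · subst h1; simp at h2⟩

noncomputable instance {V₁ V₂ : Type*} {G₁ : SimpleGraph V₁} {G₂ : SimpleGraph V₂}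
    {v₁ : V₁} {v₂ : V₂} : DecidableRel (joinGraph G₁ G₂ v₁ v₂).Adj :=
  Classical.decRel _

instance {α β : Type*} [Nonempty α] : Nonempty (α ⊕ β) :=
  ⟨Sum.inl (Classical.arbitrary α)⟩

section Aux

/-! ### Generic lemmas about `sBoundary`, `betaAt`, `beta` -/

lemma betaAt_pos_iff {V : Type*} [Fintype V] (G : SimpleGraph V) [DecidableRel G.Adj]
    (v u : V) :
    0 < betaAt G v u ↔
      ∑ w ∈ G.neighborFinset v, G.dist w u < G.degree v * G.dist v u := by
  unfold betaAt
  rw [Finset.sum_sub_distrib, Finset.sum_const, SimpleGraph.card_neighborFinset_eq_degree,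
    sub_pos, nsmul_eq_mul]
  exact_mod_cast Iff.rfl

lemma mem_sBoundary_iff {V : Type*} [Fintype V] (G : SimpleGraph V) [DecidableRel G.Adj]
    (h : Fintype.card V ≠ 1) {v : V} :
    v ∈ sBoundary G ↔ ∃ u, 0 < betaAt G v u := by
  rw [sBoundary, if_neg h]
  simp only [Set.mem_setOf_eq, betaAt_pos_iff]

lemma le_beta_iff {V : Type*} [Fintype V] [Nonempty V] (G : SimpleGraph V)
    [DecidableRel G.Adj] (v : V) (a : ℤ) :
    a ≤ beta G v ↔ ∃ u, a ≤ betaAt G v u := by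
  rw [beta, Finset.le_sup'_iff]
  simp

lemma neighborFinset_eq_empty_of_card_eq_one {V : Type*} [Fintype V] (G : SimpleGraph V)
    [DecidableRel G.Adj] (h : Fintype.card V = 1) (v : V) :
    G.neighborFinset v = ∅ := by
  have : Subsingleton V := Fintype.card_le_one_iff_subsingleton.mp h.le
  ext w
  simp only [SimpleGraph.mem_neighborFinset, Finset.notMem_empty, iff_false]
  intro hadj
  exact hadj.ne (Subsingleton.elim v w)

lemma degree_eq_zero_of_card_eq_one {V : Type*} [Fintype V] (G : SimpleGraph V)
    [DecidableRel G.Adj] (h : Fintype.card V = 1) (v : V) :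
    G.degree v = 0 := by
  rw [← SimpleGraph.card_neighborFinset_eq_degree, neighborFinset_eq_empty_of_card_eq_one G h]
  rfl

lemma beta_eq_zero_of_card_eq_one {V : Type*} [Fintype V] [Nonempty V] (G : SimpleGraph V)
    [DecidableRel G.Adj] (h : Fintype.card V = 1) (v : V) :
    beta G v = 0 := by
  have hb : betaAt G v = fun _ => (0 : ℤ) := by
    funext u
    unfold betaAt
    rw [neighborFinset_eq_empty_of_card_eq_one G h, Finset.sum_empty]
  rw [beta, hb, Finset.sup'_const]

lemma degree_pos_of_connected {V : Type*} [Fintype V] (G : SimpleGraph V)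
    [DecidableRel G.Adj] (hc : G.Connected) (h : Fintype.card V ≠ 1) (v : V) :
    0 < G.degree v := by
  have h1 : 1 < Fintype.card V := by
    have : Nonempty V := hc.nonempty
    have := Fintype.card_pos (α := V)
    omega
  obtain ⟨w, hw⟩ := Fintype.exists_ne_of_one_lt_card h1 v
  rw [SimpleGraph.degree_pos_iff_exists_adj]
  obtain ⟨p⟩ := hc v w
  cases p with
  | nil => exact absurd rfl hw.symm
  | cons h q => exact ⟨_, h⟩

/-! ### Adjacency in `joinGraph` -/

variable {V₁ V₂ : Type*} (G₁ : SimpleGraph V₁) (G₂ : SimpleGraph V₂) (v₁ : V₁) (v₂ : V₂)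

lemma joinGraph_adj_inl_inl {a b : V₁} :
    (joinGraph G₁ G₂ v₁ v₂).Adj (Sum.inl a) (Sum.inl b) ↔ G₁.Adj a b := by
  constructor
  · rintro (⟨x, y, hx, hy, h⟩ | ⟨x, y, hx, hy, h⟩ | ⟨h1, h2⟩ | ⟨h1, h2⟩) <;> simp_all
  · intro h
    exact Or.inl ⟨a, b, rfl, rfl, h⟩

lemma joinGraph_adj_inr_inr {a b : V₂} :
    (joinGraph G₁ G₂ v₁ v₂).Adj (Sum.inr a) (Sum.inr b) ↔ G₂.Adj a b := by
  constructor
  · rintro (⟨x, y, hx, hy, h⟩ | ⟨x, y, hx, hy, h⟩ | ⟨h1, h2⟩ | ⟨h1, h2⟩) <;> simp_all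
  · intro h
    exact Or.inr (Or.inl ⟨a, b, rfl, rfl, h⟩)

lemma joinGraph_adj_inl_inr {a : V₁} {b : V₂} :
    (joinGraph G₁ G₂ v₁ v₂).Adj (Sum.inl a) (Sum.inr b) ↔ a = v₁ ∧ b = v₂ := by
  constructor
  · rintro (⟨x, y, hx, hy, h⟩ | ⟨x, y, hx, hy, h⟩ | ⟨h1, h2⟩ | ⟨h1, h2⟩) <;> simp_all
  · rintro ⟨rfl, rfl⟩
    exact Or.inr (Or.inr (Or.inl ⟨rfl, rfl⟩))

lemma joinGraph_adj_inr_inl {a : V₂} {b : V₁} :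
    (joinGraph G₁ G₂ v₁ v₂).Adj (Sum.inr a) (Sum.inl b) ↔ a = v₂ ∧ b = v₁ := by
  constructor
  · rintro (⟨x, y, hx, hy, h⟩ | ⟨x, y, hx, hy, h⟩ | ⟨h1, h2⟩ | ⟨h1, h2⟩) <;> simp_all
  · rintro ⟨rfl, rfl⟩
    exact Or.inr (Or.inr (Or.inr ⟨rfl, rfl⟩))

/-- Embedding of `G₁` into the join. -/
def inlHom : G₁ →g joinGraph G₁ G₂ v₁ v₂ :=
  ⟨Sum.inl, fun h => Or.inl ⟨_, _, rfl, rfl, h⟩⟩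

/-- Embedding of `G₂` into the join. -/
def inrHom : G₂ →g joinGraph G₁ G₂ v₁ v₂ :=
  ⟨Sum.inr, fun h => Or.inr (Or.inl ⟨_, _, rfl, rfl, h⟩)⟩

/-- The distance function of the join, described explicitly. -/
noncomputable def joinDist : V₁ ⊕ V₂ → V₁ ⊕ V₂ → ℕ
  | Sum.inl a, Sum.inl b => G₁.dist a b
  | Sum.inl a, Sum.inr b => G₁.dist a v₁ + 1 + G₂.dist v₂ b
  | Sum.inr a, Sum.inl b => G₂.dist a v₂ + 1 + G₁.dist v₁ b
  | Sum.inr a, Sum.inr b => G₂.dist a b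

variable {G₁ G₂}

lemma exists_walk_joinDist (hc₁ : G₁.Connected) (hc₂ : G₂.Connected) (x y : V₁ ⊕ V₂) :
    ∃ p : (joinGraph G₁ G₂ v₁ v₂).Walk x y, p.length = joinDist G₁ G₂ v₁ v₂ x y := by
  have hbr : (joinGraph G₁ G₂ v₁ v₂).Adj (Sum.inl v₁) (Sum.inr v₂) :=
    Or.inr (Or.inr (Or.inl ⟨rfl, rfl⟩))
  cases x with
  | inl a =>
    cases y with
    | inl b =>
      obtain ⟨p, hp⟩ := hc₁.exists_walk_length_eq_dist a b
      exact ⟨p.map (inlHom G₁ G₂ v₁ v₂), (SimpleGraph.Walk.length_map (inlHom G₁ G₂ v₁ v₂) p).trans hp⟩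
    | inr b =>
      obtain ⟨p, hp⟩ := hc₁.exists_walk_length_eq_dist a v₁
      obtain ⟨q, hq⟩ := hc₂.exists_walk_length_eq_dist v₂ b
      refine ⟨(p.map (inlHom G₁ G₂ v₁ v₂)).append
        (SimpleGraph.Walk.cons hbr (q.map (inrHom G₁ G₂ v₁ v₂))), ?_⟩
      refine ((SimpleGraph.Walk.length_append _ _).trans (congrArg₂ (· + ·)
        (SimpleGraph.Walk.length_map _ p) (congrArg (· + 1) (SimpleGraph.Walk.length_map _ q)))).trans ?_
      simp only [joinDist, hp, hq]
      omega
  | inr a =>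
    cases y with
    | inl b =>
      obtain ⟨p, hp⟩ := hc₂.exists_walk_length_eq_dist a v₂
      obtain ⟨q, hq⟩ := hc₁.exists_walk_length_eq_dist v₁ b
      refine ⟨(p.map (inrHom G₁ G₂ v₁ v₂)).append
        (SimpleGraph.Walk.cons hbr.symm (q.map (inlHom G₁ G₂ v₁ v₂))), ?_⟩
      refine ((SimpleGraph.Walk.length_append _ _).trans (congrArg₂ (· + ·)
        (SimpleGraph.Walk.length_map _ p) (congrArg (· + 1) (SimpleGraph.Walk.length_map _ q)))).trans ?_
      simp only [joinDist, hp, hq]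
      omega
    | inr b =>
      obtain ⟨p, hp⟩ := hc₂.exists_walk_length_eq_dist a b
      exact ⟨p.map (inrHom G₁ G₂ v₁ v₂), (SimpleGraph.Walk.length_map (inrHom G₁ G₂ v₁ v₂) p).trans hp⟩

lemma joinDist_le_of_adj (hc₁ : G₁.Connected) (hc₂ : G₂.Connected) :
    ∀ {x y : V₁ ⊕ V₂}, (joinGraph G₁ G₂ v₁ v₂).Adj x y →
      ∀ z, joinDist G₁ G₂ v₁ v₂ x z ≤ joinDist G₁ G₂ v₁ v₂ y z + 1 := by
  rintro x y (⟨a, b, rfl, rfl, h⟩ | ⟨a, b, rfl, rfl, h⟩ | ⟨rfl, rfl⟩ | ⟨rfl, rfl⟩) z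
  · rcases z with c | c
    · have ht := hc₁.dist_triangle (u := a) (v := b) (w := c)
      have hd : G₁.dist a b = 1 := SimpleGraph.dist_eq_one_iff_adj.mpr h
      simp only [joinDist]
      omega
    · have ht := hc₁.dist_triangle (u := a) (v := b) (w := v₁)
      have hd : G₁.dist a b = 1 := SimpleGraph.dist_eq_one_iff_adj.mpr h
      simp only [joinDist]
      omega
  · rcases z with c | c
    · have ht := hc₂.dist_triangle (u := a) (v := b) (w := v₂)
      have hd : G₂.dist a b = 1 := SimpleGraph.dist_eq_one_iff_adj.mpr h
      simp only [joinDist]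
      omega
    · have ht := hc₂.dist_triangle (u := a) (v := b) (w := c)
      have hd : G₂.dist a b = 1 := SimpleGraph.dist_eq_one_iff_adj.mpr h
      simp only [joinDist]
      omega
  · rcases z with c | c
    · simp only [joinDist, SimpleGraph.dist_self]
      omega
    · simp only [joinDist, SimpleGraph.dist_self]
      omega
  · rcases z with c | c
    · simp only [joinDist, SimpleGraph.dist_self]
      omega
    · simp only [joinDist, SimpleGraph.dist_self]
      omega

lemma joinDist_le_length (hc₁ : G₁.Connected) (hc₂ : G₂.Connected) {x y : V₁ ⊕ V₂} (p : (joinGraph G₁ G₂ v₁ v₂).Walk x y) :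
    joinDist G₁ G₂ v₁ v₂ x y ≤ p.length := by
  induction p with
  | nil =>
    rename_i u
    rcases u with a | a <;> simp [joinDist, SimpleGraph.dist_self]
  | @cons u v w h q ih =>
    have h2 := joinDist_le_of_adj v₁ v₂ hc₁ hc₂ h w
    simp only [SimpleGraph.Walk.length_cons]
    omega

lemma joinGraph_dist (hc₁ : G₁.Connected) (hc₂ : G₂.Connected) (x y : V₁ ⊕ V₂) :
    (joinGraph G₁ G₂ v₁ v₂).dist x y = joinDist G₁ G₂ v₁ v₂ x y := by
  obtain ⟨p, hp⟩ := exists_walk_joinDist v₁ v₂ hc₁ hc₂ x y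
  refine le_antisymm (hp ▸ SimpleGraph.dist_le p) ?_
  obtain ⟨q, hq⟩ := (SimpleGraph.Reachable.exists_walk_length_eq_dist ⟨p⟩ :
    ∃ q : (joinGraph G₁ G₂ v₁ v₂).Walk x y, q.length = _)
  exact hq ▸ joinDist_le_length v₁ v₂ hc₁ hc₂ q

lemma dist_inl_inl (hc₁ : G₁.Connected) (hc₂ : G₂.Connected) (a b : V₁) :
    (joinGraph G₁ G₂ v₁ v₂).dist (Sum.inl a) (Sum.inl b) = G₁.dist a b :=
  joinGraph_dist v₁ v₂ hc₁ hc₂ _ _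

lemma dist_inr_inr (hc₁ : G₁.Connected) (hc₂ : G₂.Connected) (a b : V₂) :
    (joinGraph G₁ G₂ v₁ v₂).dist (Sum.inr a) (Sum.inr b) = G₂.dist a b :=
  joinGraph_dist v₁ v₂ hc₁ hc₂ _ _

lemma dist_inl_inr (hc₁ : G₁.Connected) (hc₂ : G₂.Connected) (a : V₁) (b : V₂) :
    (joinGraph G₁ G₂ v₁ v₂).dist (Sum.inl a) (Sum.inr b) =
      G₁.dist a v₁ + 1 + G₂.dist v₂ b :=
  joinGraph_dist v₁ v₂ hc₁ hc₂ _ _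

lemma dist_inr_inl (hc₁ : G₁.Connected) (hc₂ : G₂.Connected) (a : V₂) (b : V₁) :
    (joinGraph G₁ G₂ v₁ v₂).dist (Sum.inr a) (Sum.inl b) =
      G₂.dist a v₂ + 1 + G₁.dist v₁ b :=
  joinGraph_dist v₁ v₂ hc₁ hc₂ _ _

end Aux

set_option linter.unusedSectionVars false

section Aux2

variable {V₁ V₂ : Type*} [Fintype V₁] [Fintype V₂] {G₁ : SimpleGraph V₁} {G₂ : SimpleGraph V₂}
  [DecidableRel G₁.Adj] [DecidableRel G₂.Adj] (v₁ : V₁) (v₂ : V₂)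

/-- The inclusion of `V₁` into `V₁ ⊕ V₂` as an embedding. -/
def inlEmb : V₁ ↪ V₁ ⊕ V₂ := ⟨Sum.inl, Sum.inl_injective⟩

/-- The inclusion of `V₂` into `V₁ ⊕ V₂` as an embedding. -/
def inrEmb : V₂ ↪ V₁ ⊕ V₂ := ⟨Sum.inr, Sum.inr_injective⟩

lemma nbr_inl_ne {v : V₁} (hv : v ≠ v₁) :
    (joinGraph G₁ G₂ v₁ v₂).neighborFinset (Sum.inl v) =
      (G₁.neighborFinset v).map inlEmb := by
  ext w
  rcases w with b | b <;>
    simp [SimpleGraph.mem_neighborFinset, joinGraph_adj_inl_inl, joinGraph_adj_inl_inr,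
      inlEmb, hv]

lemma nbr_inl_v₁ :
    (joinGraph G₁ G₂ v₁ v₂).neighborFinset (Sum.inl v₁) =
      Finset.cons (Sum.inr v₂) ((G₁.neighborFinset v₁).map inlEmb) (by simp [inlEmb]) := by
  ext w
  rcases w with b | b <;>
    simp [SimpleGraph.mem_neighborFinset, joinGraph_adj_inl_inl, joinGraph_adj_inl_inr,
      inlEmb]

lemma nbr_inr_ne {v : V₂} (hv : v ≠ v₂) :
    (joinGraph G₁ G₂ v₁ v₂).neighborFinset (Sum.inr v) =
      (G₂.neighborFinset v).map inrEmb := by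
  ext w
  rcases w with b | b <;>
    simp [SimpleGraph.mem_neighborFinset, joinGraph_adj_inr_inr, joinGraph_adj_inr_inl,
      inrEmb, hv]

lemma nbr_inr_v₂ :
    (joinGraph G₁ G₂ v₁ v₂).neighborFinset (Sum.inr v₂) =
      Finset.cons (Sum.inl v₁) ((G₂.neighborFinset v₂).map inrEmb) (by simp [inrEmb]) := by
  ext w
  rcases w with b | b <;>
    simp [SimpleGraph.mem_neighborFinset, joinGraph_adj_inr_inr, joinGraph_adj_inr_inl,
      inrEmb]

variable (hc₁ : G₁.Connected) (hc₂ : G₂.Connected)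

include hc₁ hc₂

lemma betaAt_inl_inl_ne {v : V₁} (hv : v ≠ v₁) (u : V₁) :
    betaAt (joinGraph G₁ G₂ v₁ v₂) (Sum.inl v) (Sum.inl u) = betaAt G₁ v u := by
  unfold betaAt
  rw [nbr_inl_ne v₁ v₂ hv, Finset.sum_map]
  refine Finset.sum_congr rfl fun w _ => ?_
  simp [inlEmb, dist_inl_inl v₁ v₂ hc₁ hc₂]

lemma betaAt_inl_inr_ne {v : V₁} (hv : v ≠ v₁) (u : V₂) :
    betaAt (joinGraph G₁ G₂ v₁ v₂) (Sum.inl v) (Sum.inr u) = betaAt G₁ v v₁ := by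
  unfold betaAt
  rw [nbr_inl_ne v₁ v₂ hv, Finset.sum_map]
  refine Finset.sum_congr rfl fun w _ => ?_
  simp only [inlEmb, Function.Embedding.coeFn_mk, dist_inl_inr v₁ v₂ hc₁ hc₂]
  push_cast
  ring

lemma betaAt_inl_v₁_inl (u : V₁) :
    betaAt (joinGraph G₁ G₂ v₁ v₂) (Sum.inl v₁) (Sum.inl u) = betaAt G₁ v₁ u - 1 := by
  unfold betaAt
  rw [nbr_inl_v₁ v₁ v₂, Finset.sum_cons, Finset.sum_map]
  have h1 : ∀ w ∈ G₁.neighborFinset v₁,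
      (((joinGraph G₁ G₂ v₁ v₂).dist (Sum.inl v₁) (Sum.inl u) : ℤ) -
        ((joinGraph G₁ G₂ v₁ v₂).dist (inlEmb w) (Sum.inl u) : ℤ)) =
      ((G₁.dist v₁ u : ℤ) - (G₁.dist w u : ℤ)) := by
    intro w _
    simp [inlEmb, dist_inl_inl v₁ v₂ hc₁ hc₂]
  rw [Finset.sum_congr rfl h1, dist_inl_inl v₁ v₂ hc₁ hc₂, dist_inr_inl v₁ v₂ hc₁ hc₂,
    SimpleGraph.dist_self]
  push_cast
  ring

lemma betaAt_inl_v₁_inr (u : V₂) :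
    betaAt (joinGraph G₁ G₂ v₁ v₂) (Sum.inl v₁) (Sum.inr u) = 1 - (G₁.degree v₁ : ℤ) := by
  unfold betaAt
  rw [nbr_inl_v₁ v₁ v₂, Finset.sum_cons, Finset.sum_map]
  have h1 : ∀ w ∈ G₁.neighborFinset v₁,
      (((joinGraph G₁ G₂ v₁ v₂).dist (Sum.inl v₁) (Sum.inr u) : ℤ) -
        ((joinGraph G₁ G₂ v₁ v₂).dist (inlEmb w) (Sum.inr u) : ℤ)) = -1 := by
    intro w hw
    rw [SimpleGraph.mem_neighborFinset] at hw
    have hd : G₁.dist w v₁ = 1 := by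
      rw [SimpleGraph.dist_eq_one_iff_adj]
      exact hw.symm
    simp only [inlEmb, Function.Embedding.coeFn_mk, dist_inl_inr v₁ v₂ hc₁ hc₂,
      SimpleGraph.dist_self, hd]
    push_cast
    ring
  rw [Finset.sum_congr rfl h1, Finset.sum_const, dist_inl_inr v₁ v₂ hc₁ hc₂,
    dist_inr_inr v₁ v₂ hc₁ hc₂, SimpleGraph.dist_self,
    ← SimpleGraph.card_neighborFinset_eq_degree]
  push_cast
  ring

lemma betaAt_inr_inr_ne {v : V₂} (hv : v ≠ v₂) (u : V₂) :
    betaAt (joinGraph G₁ G₂ v₁ v₂) (Sum.inr v) (Sum.inr u) = betaAt G₂ v u := by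
  unfold betaAt
  rw [nbr_inr_ne v₁ v₂ hv, Finset.sum_map]
  refine Finset.sum_congr rfl fun w _ => ?_
  simp [inrEmb, dist_inr_inr v₁ v₂ hc₁ hc₂]

lemma betaAt_inr_inl_ne {v : V₂} (hv : v ≠ v₂) (u : V₁) :
    betaAt (joinGraph G₁ G₂ v₁ v₂) (Sum.inr v) (Sum.inl u) = betaAt G₂ v v₂ := by
  unfold betaAt
  rw [nbr_inr_ne v₁ v₂ hv, Finset.sum_map]
  refine Finset.sum_congr rfl fun w _ => ?_
  simp only [inrEmb, Function.Embedding.coeFn_mk, dist_inr_inl v₁ v₂ hc₁ hc₂]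
  push_cast
  ring

lemma betaAt_inr_v₂_inr (u : V₂) :
    betaAt (joinGraph G₁ G₂ v₁ v₂) (Sum.inr v₂) (Sum.inr u) = betaAt G₂ v₂ u - 1 := by
  unfold betaAt
  rw [nbr_inr_v₂ v₁ v₂, Finset.sum_cons, Finset.sum_map]
  have h1 : ∀ w ∈ G₂.neighborFinset v₂,
      (((joinGraph G₁ G₂ v₁ v₂).dist (Sum.inr v₂) (Sum.inr u) : ℤ) -
        ((joinGraph G₁ G₂ v₁ v₂).dist (inrEmb w) (Sum.inr u) : ℤ)) =
      ((G₂.dist v₂ u : ℤ) - (G₂.dist w u : ℤ)) := by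
    intro w _
    simp [inrEmb, dist_inr_inr v₁ v₂ hc₁ hc₂]
  rw [Finset.sum_congr rfl h1, dist_inr_inr v₁ v₂ hc₁ hc₂, dist_inl_inr v₁ v₂ hc₁ hc₂,
    SimpleGraph.dist_self]
  push_cast
  ring

lemma betaAt_inr_v₂_inl (u : V₁) :
    betaAt (joinGraph G₁ G₂ v₁ v₂) (Sum.inr v₂) (Sum.inl u) = 1 - (G₂.degree v₂ : ℤ) := by
  unfold betaAt
  rw [nbr_inr_v₂ v₁ v₂, Finset.sum_cons, Finset.sum_map]
  have h1 : ∀ w ∈ G₂.neighborFinset v₂,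
      (((joinGraph G₁ G₂ v₁ v₂).dist (Sum.inr v₂) (Sum.inl u) : ℤ) -
        ((joinGraph G₁ G₂ v₁ v₂).dist (inrEmb w) (Sum.inl u) : ℤ)) = -1 := by
    intro w hw
    rw [SimpleGraph.mem_neighborFinset] at hw
    have hd : G₂.dist w v₂ = 1 := by
      rw [SimpleGraph.dist_eq_one_iff_adj]
      exact hw.symm
    simp only [inrEmb, Function.Embedding.coeFn_mk, dist_inr_inl v₁ v₂ hc₁ hc₂,
      SimpleGraph.dist_self, hd]
    push_cast
    ring
  rw [Finset.sum_congr rfl h1, Finset.sum_const, dist_inr_inl v₁ v₂ hc₁ hc₂,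
    dist_inl_inl v₁ v₂ hc₁ hc₂, SimpleGraph.dist_self,
    ← SimpleGraph.card_neighborFinset_eq_degree]
  push_cast
  ring

end Aux2

section Aux3

variable {V₁ V₂ : Type*} [Fintype V₁] [Fintype V₂] [Nonempty V₁] [Nonempty V₂]
  {G₁ : SimpleGraph V₁} {G₂ : SimpleGraph V₂}
  [DecidableRel G₁.Adj] [DecidableRel G₂.Adj] (v₁ : V₁) (v₂ : V₂)
  (hc₁ : G₁.Connected) (hc₂ : G₂.Connected)

lemma card_join_ne_one : Fintype.card (V₁ ⊕ V₂) ≠ 1 := by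
  have h1 := Fintype.card_pos (α := V₁)
  have h2 := Fintype.card_pos (α := V₂)
  rw [Fintype.card_sum]
  omega

include hc₁ hc₂

lemma inl_mem_join_iff (v : V₁) :
    Sum.inl v ∈ sBoundary (joinGraph G₁ G₂ v₁ v₂) ↔
      v ∈ sBoundary G₁ ∧ ¬(v = v₁ ∧ beta G₁ v₁ = 1) := by
  rw [mem_sBoundary_iff _ card_join_ne_one]
  by_cases hv : v = v₁
  · subst hv
    have lhs : (∃ u, 0 < betaAt (joinGraph G₁ G₂ v v₂) (Sum.inl v) u) ↔
        ((∃ u, 1 < betaAt G₁ v u) ∨ G₁.degree v = 0) := by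
      constructor
      · rintro ⟨u | u, hu⟩
        · rw [betaAt_inl_v₁_inl v v₂ hc₁ hc₂] at hu
          exact Or.inl ⟨u, by omega⟩
        · rw [betaAt_inl_v₁_inr v v₂ hc₁ hc₂] at hu
          right
          omega
      · rintro (⟨u, hu⟩ | hdeg)
        · exact ⟨Sum.inl u, by rw [betaAt_inl_v₁_inl v v₂ hc₁ hc₂]; omega⟩
        · refine ⟨Sum.inr (Classical.arbitrary V₂), ?_⟩
          rw [betaAt_inl_v₁_inr v v₂ hc₁ hc₂, hdeg]
          norm_num
    rw [lhs]
    by_cases h1 : Fintype.card V₁ = 1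
    · have hdeg := degree_eq_zero_of_card_eq_one G₁ h1 v
      have hbeta := beta_eq_zero_of_card_eq_one G₁ h1 v
      have hmem : v ∈ sBoundary G₁ := by
        rw [sBoundary, if_pos h1]; exact Set.mem_univ _
      simp [hdeg, hbeta, hmem]
    · have hdeg := degree_pos_of_connected G₁ hc₁ h1 v
      rw [mem_sBoundary_iff _ h1]
      have h2 : (∃ u, 1 < betaAt G₁ v u) ↔ 2 ≤ beta G₁ v := by
        rw [le_beta_iff]
        exact exists_congr fun u => by omega
      have h3 : (∃ u, 0 < betaAt G₁ v u) ↔ 1 ≤ beta G₁ v := by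
        rw [le_beta_iff]
        exact exists_congr fun u => by omega
      rw [h2, h3]
      have hne : G₁.degree v ≠ 0 := hdeg.ne'
      constructor
      · rintro (hb | hb)
        · exact ⟨by omega, fun ⟨_, hh⟩ => by omega⟩
        · exact absurd hb hne
      · rintro ⟨hb, hb2⟩
        have : ¬(beta G₁ v = 1) := fun h => hb2 ⟨rfl, h⟩
        left
        omega
  · have h1 : Fintype.card V₁ ≠ 1 := by
      intro h
      have : Subsingleton V₁ := Fintype.card_le_one_iff_subsingleton.mp h.le
      exact hv (Subsingleton.elim v v₁)
    rw [mem_sBoundary_iff _ h1]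
    have hiff : (∃ u, 0 < betaAt (joinGraph G₁ G₂ v₁ v₂) (Sum.inl v) u) ↔
        ∃ u, 0 < betaAt G₁ v u := by
      constructor
      · rintro ⟨u | u, hu⟩
        · exact ⟨u, by rwa [betaAt_inl_inl_ne v₁ v₂ hc₁ hc₂ hv] at hu⟩
        · exact ⟨v₁, by rwa [betaAt_inl_inr_ne v₁ v₂ hc₁ hc₂ hv] at hu⟩
      · rintro ⟨u, hu⟩
        exact ⟨Sum.inl u, by rwa [betaAt_inl_inl_ne v₁ v₂ hc₁ hc₂ hv]⟩
    rw [hiff]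
    simp [hv]

lemma inr_mem_join_iff (v : V₂) :
    Sum.inr v ∈ sBoundary (joinGraph G₁ G₂ v₁ v₂) ↔
      v ∈ sBoundary G₂ ∧ ¬(v = v₂ ∧ beta G₂ v₂ = 1) := by
  rw [mem_sBoundary_iff _ card_join_ne_one]
  by_cases hv : v = v₂
  · subst hv
    have lhs : (∃ u, 0 < betaAt (joinGraph G₁ G₂ v₁ v) (Sum.inr v) u) ↔
        ((∃ u, 1 < betaAt G₂ v u) ∨ G₂.degree v = 0) := by
      constructor
      · rintro ⟨u | u, hu⟩
        · rw [betaAt_inr_v₂_inl v₁ v hc₁ hc₂] at hu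
          right
          omega
        · rw [betaAt_inr_v₂_inr v₁ v hc₁ hc₂] at hu
          exact Or.inl ⟨u, by omega⟩
      · rintro (⟨u, hu⟩ | hdeg)
        · exact ⟨Sum.inr u, by rw [betaAt_inr_v₂_inr v₁ v hc₁ hc₂]; omega⟩
        · refine ⟨Sum.inl (Classical.arbitrary V₁), ?_⟩
          rw [betaAt_inr_v₂_inl v₁ v hc₁ hc₂, hdeg]
          norm_num
    rw [lhs]
    by_cases h1 : Fintype.card V₂ = 1
    · have hdeg := degree_eq_zero_of_card_eq_one G₂ h1 v
      have hbeta := beta_eq_zero_of_card_eq_one G₂ h1 v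
      have hmem : v ∈ sBoundary G₂ := by
        rw [sBoundary, if_pos h1]; exact Set.mem_univ _
      simp [hdeg, hbeta, hmem]
    · have hdeg := degree_pos_of_connected G₂ hc₂ h1 v
      rw [mem_sBoundary_iff _ h1]
      have h2 : (∃ u, 1 < betaAt G₂ v u) ↔ 2 ≤ beta G₂ v := by
        rw [le_beta_iff]
        exact exists_congr fun u => by omega
      have h3 : (∃ u, 0 < betaAt G₂ v u) ↔ 1 ≤ beta G₂ v := by
        rw [le_beta_iff]
        exact exists_congr fun u => by omega
      rw [h2, h3]
      have hne : G₂.degree v ≠ 0 := hdeg.ne'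
      constructor
      · rintro (hb | hb)
        · exact ⟨by omega, fun ⟨_, hh⟩ => by omega⟩
        · exact absurd hb hne
      · rintro ⟨hb, hb2⟩
        have : ¬(beta G₂ v = 1) := fun h => hb2 ⟨rfl, h⟩
        left
        omega
  · have h1 : Fintype.card V₂ ≠ 1 := by
      intro h
      have : Subsingleton V₂ := Fintype.card_le_one_iff_subsingleton.mp h.le
      exact hv (Subsingleton.elim v v₂)
    rw [mem_sBoundary_iff _ h1]
    have hiff : (∃ u, 0 < betaAt (joinGraph G₁ G₂ v₁ v₂) (Sum.inr v) u) ↔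
        ∃ u, 0 < betaAt G₂ v u := by
      constructor
      · rintro ⟨u | u, hu⟩
        · exact ⟨v₂, by rwa [betaAt_inr_inl_ne v₁ v₂ hc₁ hc₂ hv] at hu⟩
        · exact ⟨u, by rwa [betaAt_inr_inr_ne v₁ v₂ hc₁ hc₂ hv] at hu⟩
      · rintro ⟨u, hu⟩
        exact ⟨Sum.inr u, by rwa [betaAt_inr_inr_ne v₁ v₂ hc₁ hc₂ hv]⟩
    rw [hiff]
    simp [hv]

end Aux3

theorem sBoundary_joinGraph {V₁ V₂ : Type*} [Fintype V₁] [Fintype V₂]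
    [Nonempty V₁] [Nonempty V₂]
    (G₁ : SimpleGraph V₁) (G₂ : SimpleGraph V₂) [DecidableRel G₁.Adj] [DecidableRel G₂.Adj]
    (hc₁ : G₁.Connected) (hc₂ : G₂.Connected) (v₁ : V₁) (v₂ : V₂) :
    (beta G₁ v₁ ≠ 1 → beta G₂ v₂ ≠ 1 →
      sBoundary (joinGraph G₁ G₂ v₁ v₂) =
        Sum.inl '' sBoundary G₁ ∪ Sum.inr '' sBoundary G₂) ∧
    (beta G₁ v₁ = 1 → beta G₂ v₂ ≠ 1 →
      sBoundary (joinGraph G₁ G₂ v₁ v₂) =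
        (Sum.inl '' sBoundary G₁ ∪ Sum.inr '' sBoundary G₂) \ {Sum.inl v₁}) ∧
    (beta G₁ v₁ ≠ 1 → beta G₂ v₂ = 1 →
      sBoundary (joinGraph G₁ G₂ v₁ v₂) =
        (Sum.inl '' sBoundary G₁ ∪ Sum.inr '' sBoundary G₂) \ {Sum.inr v₂}) ∧
    (beta G₁ v₁ = 1 → beta G₂ v₂ = 1 →
      sBoundary (joinGraph G₁ G₂ v₁ v₂) =
        (Sum.inl '' sBoundary G₁ ∪ Sum.inr '' sBoundary G₂) \ {Sum.inl v₁, Sum.inr v₂}) := by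
  have key₁ := inl_mem_join_iff v₁ v₂ hc₁ hc₂
  have key₂ := inr_mem_join_iff v₁ v₂ hc₁ hc₂
  refine ⟨?_, ?_, ?_, ?_⟩ <;> intro hβ₁ hβ₂ <;> ext x <;> rcases x with v | v <;>
    simp [key₁, key₂, hβ₁, hβ₂]
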